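/- arXiv:1205.0797 — 5 statements merged into one kernel-verified Lean document; each statement's English description precedes it below -/
import Mathlib

section
/- For the ideals u_{n,i} = Σ_{j=i}^{n} P_{j-1}∂ⱼ of the Lie algebra u_n, one has [u_{n,i}, u_{n,i}] ⊆ u_{n,i+1} for all 1 ≤ i ≤ n. -/
open MvPolynomial

noncomputable section

/-- The polynomial algebra `Pₙ = K[x₀,…,x_{n-1}]`. -/
abbrev Pn (K : Type) [Field K] (n : ℕ) : Type := MvPolynomial (Fin n) K

/-- The Lie algebra of `K`-derivations of `Pₙ`. -/
abbrev DerPn (K : Type) [Field K] (n : ℕ) : Type :=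
  Derivation K (Pn K n) (Pn K n)

/-- The subalgebra `P_j = K[x₀,…,x_{j-1}]` of `Pₙ` (0-indexed: variables with index `< j`). -/
def Psub (K : Type) [Field K] (n j : ℕ) : Subalgebra K (Pn K n) :=
  MvPolynomial.supported K {k : Fin n | (k : ℕ) < j}

/-- The subspace `u_{n,i} = Σ_{j=i}^n P_{j-1}∂_j` (1-indexed `i`; `U K n 1 = u_n`).
A derivation `D` lies in it iff `D(x_j) ∈ P_{j-1}` for all `j` and `D(x_j) = 0` for `j < i`
(0-indexed: `D (X j) = 0` when `(j:ℕ)+1 < i`). -/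
def U (K : Type) [Field K] (n i : ℕ) : Submodule K (DerPn K n) where
  carrier := {D | ∀ j : Fin n, D (X j) ∈ Psub K n j ∧ ((j : ℕ) + 1 < i → D (X j) = 0)}
  add_mem' := by
    intro a b ha hb j
    refine ⟨?_, fun h => ?_⟩
    · simpa using Subalgebra.add_mem _ (ha j).1 (hb j).1
    · simp [(ha j).2 h, (hb j).2 h]
  zero_mem' := by
    intro j
    refine ⟨by simpa using (Psub K n j).zero_mem, fun _ => rfl⟩
  smul_mem' := by
    intro c a ha j
    refine ⟨?_, fun h => ?_⟩
    · simpa using Subalgebra.smul_mem _ (ha j).1 c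
    · simp [(ha j).2 h]

/-- The span of all brackets `⁅a,b⁆` with `a ∈ A`, `b ∈ B`. -/
def lieSpan (K : Type) [Field K] (n : ℕ) (A B : Submodule K (DerPn K n)) :
    Submodule K (DerPn K n) :=
  Submodule.span K {x | ∃ a ∈ A, ∃ b ∈ B, x = ⁅a, b⁆}

/-- The derived series of a subspace `G`: `G_{(0)} = G`, `G_{(i+1)} = [G_{(i)}, G_{(i)}]`. -/
def derivedSub (K : Type) [Field K] (n : ℕ) (G : Submodule K (DerPn K n)) : ℕ → Submodule K (DerPn K n)
  | 0 => G
  | i + 1 => lieSpan K n (derivedSub K n G i) (derivedSub K n G i)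

/-! For `a, b ∈ u_{n,i}`, `⁅a, b⁆ (x_j) = a (b x_j) - b (a x_j)` with `a x_j, b x_j ∈ P_j`. A derivation
sending the generators of `P_j` into `P_j` preserves `P_j`, which gives `⁅a, b⁆ ∈ u_n`; and for
`j < i` both `a` and `b` kill the generators of `P_j`, hence all of `P_j`, so `⁅a, b⁆ (x_j) = 0`. -/

theorem Derivation.mapsTo_adjoin {R A : Type*} [CommSemiring R] [CommSemiring A] [Algebra R A]
    (D : Derivation R A A) {s : Set A} (h : Set.MapsTo D s (Algebra.adjoin R s)) :
    Set.MapsTo D (Algebra.adjoin R s) (Algebra.adjoin R s) := by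
  intro a ha
  induction ha using Algebra.adjoin_induction with
  | mem x hx => exact h hx
  | algebraMap r => simp
  | add x y _ _ hx hy => rw [map_add]; exact add_mem hx hy
  | mul x y hx' hy' hx hy =>
    rw [D.leibniz, smul_eq_mul, smul_eq_mul]
    exact add_mem (mul_mem hx' hy) (mul_mem hy' hx)

theorem MvPolynomial.derivation_mapsTo_supported {R σ : Type*} [CommSemiring R]
    (D : Derivation R (MvPolynomial σ R) (MvPolynomial σ R)) {s : Set σ}
    (h : ∀ k ∈ s, D (X k) ∈ supported R s) :
    Set.MapsTo D (supported R s) (supported R s) := by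
  rw [supported_eq_adjoin_X] at h ⊢
  exact D.mapsTo_adjoin (Set.forall_mem_image.2 h)

theorem MvPolynomial.derivation_eq_zero_of_supported {R σ : Type*} [CommSemiring R]
    {D : Derivation R (MvPolynomial σ R) (MvPolynomial σ R)} {s : Set σ}
    (h : ∀ k ∈ s, D (X k) = 0) {f : MvPolynomial σ R} (hf : f ∈ supported R s) : D f = 0 :=
  derivation_eqOn_supported (D₂ := 0) h hf

section

variable {K : Type} [Field K] {n i : ℕ} {D : DerPn K n}

theorem Psub_mono {j m : ℕ} (h : j ≤ m) : Psub K n j ≤ Psub K n m :=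
  supported_mono fun _ hk => lt_of_lt_of_le hk h

theorem mapsTo_Psub_of_mem_U (hD : D ∈ U K n i) (j : ℕ) :
    Set.MapsTo D (Psub K n j) (Psub K n j) :=
  derivation_mapsTo_supported D fun k hk => Psub_mono (le_of_lt hk) (hD k).1

theorem apply_eq_zero_of_mem_U (hD : D ∈ U K n i) {j : ℕ} (hj : j < i) {p : Pn K n}
    (hp : p ∈ Psub K n j) : D p = 0 :=
  derivation_eq_zero_of_supported (fun k hk => (hD k).2 (by rw [Set.mem_ofPred_eq] at hk; omega)) hp

end

theorem bracket_U_self_general (K : Type) [Field K] (n : ℕ) (i : ℕ) :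
    lieSpan K n (U K n i) (U K n i) ≤ U K n (i + 1) := by
  refine Submodule.span_le.2 ?_
  rintro _ ⟨a, ha, b, hb, rfl⟩ j
  refine ⟨?_, fun hj => ?_⟩ <;> rw [Derivation.commutator_apply]
  · exact sub_mem (mapsTo_Psub_of_mem_U ha j (hb j).1) (mapsTo_Psub_of_mem_U hb j (ha j).1)
  · have hji : (j : ℕ) < i := by omega
    rw [apply_eq_zero_of_mem_U ha hji (hb j).1, apply_eq_zero_of_mem_U hb hji (ha j).1, sub_zero]

/-- `[u_{n,i}, u_{n,i}] ⊆ u_{n,i+1}` for all `1 ≤ i ≤ n`. -/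
theorem bracket_U_self (K : Type) [Field K] [CharZero K] (n : ℕ) (hn : 2 ≤ n)
    (i : ℕ) (h1 : 1 ≤ i) (h2 : i ≤ n) :
    lieSpan K n (U K n i) (U K n i) ≤ U K n (i + 1) :=
  bracket_U_self_general K n i
end
end

section
/- The derived series of the Lie algebra u_n of unitriangular polynomial derivations satisfies (u_n)_{(i)} = u_{n,i+1} for all i ≥ 0, where (u_n)_{(0)} = u_n and (u_n)_{(i)} = [(u_n)_{(i-1)}, (u_n)_{(i-1)}]. In particular, the derived series is a strictly descending chain of length n reaching 0 at step n. -/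
open MvPolynomial

noncomputable section

/-!
Write a derivation as `Σ f_k ∂_k`. Elements of `u_{n,i}` map every `P_k` into itself and kill
`P_{i-1}`, so their brackets also kill `x_i`: `[u_{n,i}, u_{n,i}] ⊆ u_{n,i+1}`. Conversely, for
`k > i` and `f ∈ P_{k-1}`, choose `g ∈ P_{k-1}` with `∂_i g = f` (integrating a monomial in `x_i`
divides by its new exponent, which needs characteristic zero); then `f ∂_k = [∂_i, g ∂_k]` with both
factors in `u_{n,i}`. By induction `(u_n)_{(i)} = u_{n,i+1}`; the series is strict because
`∂_{i+1} ∈ u_{n,i+1} \ u_{n,i+2}`, and `u_{n,n+1} = 0`.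
-/

theorem Derivation.map_mem_adjoin {R A : Type*} [CommSemiring R] [CommSemiring A] [Algebra R A]
    (D : Derivation R A A) {s : Set A} (hD : ∀ x ∈ s, D x ∈ Algebra.adjoin R s) {a : A}
    (ha : a ∈ Algebra.adjoin R s) : D a ∈ Algebra.adjoin R s := by
  induction ha using Algebra.adjoin_induction with
  | mem x hx => exact hD x hx
  | algebraMap r => simp
  | add x y _ _ hx hy => simpa using add_mem hx hy
  | mul x y hx' hy' hx hy =>
    rw [D.leibniz, smul_eq_mul, smul_eq_mul]
    exact add_mem (mul_mem hx' hy) (mul_mem hy' hx)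

namespace MvPolynomial

variable {σ R : Type*}

theorem monomial_mem_supported [CommSemiring R] {s : Set σ} {d : σ →₀ ℕ} (hd : ↑d.support ⊆ s)
    (c : R) : monomial d c ∈ supported R s := by
  rcases eq_or_ne c 0 with rfl | hc
  · simp
  · rwa [mem_supported, vars_monomial hc]

theorem support_subset_of_mem_supported [CommSemiring R] {s : Set σ} {p : MvPolynomial σ R}
    (hp : p ∈ supported R s) {d : σ →₀ ℕ} (hd : d ∈ p.support) : ↑d.support ⊆ s :=
  fun i hi => mem_supported.1 hp ((mem_vars_iff_mem_support i).2 ⟨d, hd, hi⟩)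

theorem pderiv_monomial_add_single {K : Type*} [Field K] [CharZero K] (i : σ) (d : σ →₀ ℕ)
    (c : K) : pderiv i (monomial (d + Finsupp.single i 1) (c / (d i + 1))) = monomial d c := by
  rw [pderiv_monomial, add_tsub_cancel_right, Finsupp.add_apply, Finsupp.single_eq_same,
    Nat.cast_add_one, div_mul_cancel₀ _ (Nat.cast_add_one_ne_zero (d i))]

theorem exists_pderiv_eq_of_mem_supported {K : Type*} [Field K] [CharZero K] {s : Set σ} {i : σ}
    (hi : i ∈ s) {p : MvPolynomial σ K} (hp : p ∈ supported K s) :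
    ∃ g ∈ supported K s, pderiv i g = p := by
  classical
  refine ⟨∑ d ∈ p.support, monomial (d + Finsupp.single i 1) (coeff d p / (d i + 1)),
    sum_mem fun d hd => monomial_mem_supported ?_ _, ?_⟩
  · intro j hj
    rcases Finset.mem_union.1 (Finsupp.support_add hj) with hj | hj
    · exact support_subset_of_mem_supported hp hd hj
    · rwa [Finset.mem_singleton.1 (Finsupp.support_single_subset hj)]
  · simp only [map_sum, pderiv_monomial_add_single]
    exact p.as_sum.symm

theorem derivation_eq_sum_smul_pderiv [Fintype σ] [CommSemiring R]
    (D : Derivation R (MvPolynomial σ R) (MvPolynomial σ R)) : D = ∑ i, D (X i) • pderiv i := by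
  classical
  refine derivation_ext fun j => ?_
  rw [← Derivation.coeFnAddMonoidHom_apply (∑ i, _), map_sum, Finset.sum_apply,
    Finset.sum_eq_single j (fun i _ hij => by simp [pderiv_X_of_ne hij.symm]) (by simp)]
  simp

theorem lie_pderiv_smul_pderiv [CommRing R] (i k : σ) (g : MvPolynomial σ R) :
    ⁅pderiv (R := R) i, g • pderiv (R := R) k⁆ = pderiv i g • pderiv k := by
  refine derivation_ext fun j => ?_
  have hconst : ∀ a b : σ, pderiv a (pderiv b (X j) : MvPolynomial σ R) = 0 := fun a b => by
    rcases eq_or_ne j b with rfl | h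
    · rw [pderiv_X_self, pderiv_one]
    · rw [pderiv_X_of_ne h, map_zero]
  simp only [Derivation.commutator_apply, Derivation.smul_apply, smul_eq_mul, pderiv_mul, hconst,
    mul_zero, add_zero, sub_zero]

end MvPolynomial

section UnitriangularDerivations

variable {K : Type} [Field K] {n : ℕ}

theorem Psub_monotone : Monotone (Psub K n) :=
  fun j k h => supported_mono fun _ (hl : _ < j) => (by omega : _ < k)

theorem U_antitone : Antitone (U K n) :=
  fun i i' h _ hD j => ⟨(hD j).1, fun hj => (hD j).2 (by omega)⟩

theorem U_eq_bot : U K n (n + 1) = ⊥ :=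
  eq_bot_iff.2 fun _ hD => derivation_ext fun j => (hD j).2 (by omega)

theorem smul_pderiv_mem_U {k : Fin n} {g : Pn K n} (hg : g ∈ Psub K n k) :
    g • pderiv k ∈ U K n (k + 1) := by
  intro j
  rcases eq_or_ne j k with rfl | hjk
  · simpa using hg
  · simp [pderiv_X_of_ne hjk]

theorem pderiv_mem_U (k : Fin n) : (pderiv k : DerPn K n) ∈ U K n (k + 1) := by
  simpa using smul_pderiv_mem_U (one_mem (Psub K n k))

theorem pderiv_notMem_U (k : Fin n) : (pderiv k : DerPn K n) ∉ U K n (k + 2) :=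
  fun h => one_ne_zero ((pderiv_X_self k).symm.trans ((h k).2 (by omega)))

theorem map_mem_Psub {i : ℕ} {D : DerPn K n} (hD : D ∈ U K n i) (k : ℕ) {p : Pn K n}
    (hp : p ∈ Psub K n k) : D p ∈ Psub K n k := by
  rw [Psub, supported_eq_adjoin_X] at hp ⊢
  refine D.map_mem_adjoin ?_ hp
  rintro _ ⟨m, hmk : (m : ℕ) < k, rfl⟩
  exact Psub_monotone hmk.le (hD m).1

theorem apply_eq_zero_of_mem_Psub {k : ℕ} {D : DerPn K n} (hD : D ∈ U K n (k + 1)) {p : Pn K n}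
    (hp : p ∈ Psub K n k) : D p = 0 :=
  derivation_eqOn_supported (D₂ := 0)
    (fun (m : Fin n) (hmk : (m : ℕ) < k) => (hD m).2 (by omega)) hp

theorem lieSpan_U_le (i : ℕ) : lieSpan K n (U K n (i + 1)) (U K n (i + 1)) ≤ U K n (i + 2) := by
  refine Submodule.span_le.2 ?_
  rintro _ ⟨D, hD, E, hE, rfl⟩ j
  rw [Derivation.commutator_apply]
  refine ⟨sub_mem (map_mem_Psub hD j (hE j).1) (map_mem_Psub hE j (hD j).1), fun hj => ?_⟩
  rcases Nat.lt_or_ge (j : ℕ) i with hji | hij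
  · rw [(hD j).2 (by omega), (hE j).2 (by omega), map_zero, map_zero, sub_zero]
  · have hj : (j : ℕ) = i := by omega
    rw [apply_eq_zero_of_mem_Psub hD (hj ▸ (hE j).1),
      apply_eq_zero_of_mem_Psub hE (hj ▸ (hD j).1), sub_zero]

theorem U_le_lieSpan [CharZero K] (i : ℕ) :
    U K n (i + 2) ≤ lieSpan K n (U K n (i + 1)) (U K n (i + 1)) := by
  intro D hD
  rw [derivation_eq_sum_smul_pderiv D]
  refine sum_mem fun k _ => ?_
  rcases Nat.lt_or_ge i k with hik | hki
  · obtain ⟨g, hg, hgD⟩ := exists_pderiv_eq_of_mem_supported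
      (show (⟨i, hik.trans k.isLt⟩ : Fin n) ∈ {l : Fin n | (l : ℕ) < k} from hik) (hD k).1
    rw [← hgD, ← lie_pderiv_smul_pderiv]
    exact Submodule.subset_span
      ⟨_, pderiv_mem_U _, _, U_antitone (by omega) (smul_pderiv_mem_U hg), rfl⟩
  · rw [(hD k).2 (by omega), zero_smul]
    exact zero_mem _

theorem lieSpan_U [CharZero K] (i : ℕ) :
    lieSpan K n (U K n (i + 1)) (U K n (i + 1)) = U K n (i + 2) :=
  (lieSpan_U_le i).antisymm (U_le_lieSpan i)

end UnitriangularDerivations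

theorem derivedSeries_un_general (K : Type) [Field K] [CharZero K] (n : ℕ) :
    (∀ i : ℕ, derivedSub K n (U K n 1) i = U K n (i + 1)) ∧
    (∀ i : ℕ, i < n → derivedSub K n (U K n 1) (i + 1) < derivedSub K n (U K n 1) i) ∧
    derivedSub K n (U K n 1) n = ⊥ := by
  have hseries : ∀ i, derivedSub K n (U K n 1) i = U K n (i + 1) := by
    intro i
    induction i with
    | zero => rfl
    | succ i ih => rw [derivedSub, ih, lieSpan_U]
  refine ⟨hseries, fun i hi => ?_, by rw [hseries, U_eq_bot]⟩
  rw [hseries, hseries]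
  exact lt_of_le_of_ne (U_antitone (by omega))
    fun h => pderiv_notMem_U ⟨i, hi⟩ (h ▸ pderiv_mem_U ⟨i, hi⟩)

/-- the derived series of `u_n`: `(u_n)_{(i)} = u_{n,i+1}` for all `i ≥ 0`;
it is strictly descending and reaches `0` at step `n`. -/
theorem derivedSeries_un (K : Type) [Field K] [CharZero K] (n : ℕ) (hn : 2 ≤ n) :
    (∀ i : ℕ, derivedSub K n (U K n 1) i = U K n (i + 1)) ∧
    (∀ i : ℕ, i < n → derivedSub K n (U K n 1) (i + 1) < derivedSub K n (U K n 1) i) ∧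
    derivedSub K n (U K n 1) n = ⊥ :=
  derivedSeries_un_general K n
end
end

section
/- Let λᵢ ∈ P_{i-1} and uᵢ ∈ u_{n,i+1}, λ_{i-1} ∈ K*, u_{i-1} ∈ u_{n,i}. If [λ_{i-1}∂_{i-1} + u_{i-1}, λᵢ∂ᵢ + uᵢ] = 0 in u_n, then ∂_{i-1}(λᵢ) = 0, i.e., λᵢ ∈ P_{i-2}. -/
open MvPolynomial

noncomputable section

/-!
Evaluate the bracket at `xᵢ`. The second derivation sends `xᵢ` to `λᵢ`, and `u_{i-1}` kills
`λᵢ ∈ P_{i-1}`, so the first term is `λ_{i-1} ∂_{i-1}(λᵢ)`. The first derivation sends `xᵢ` to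
`u_{i-1}(xᵢ) ∈ P_{i-1}`, which both `∂ᵢ` and `uᵢ ∈ u_{n,i+1}` kill, so the second term vanishes.
Hence `∂_{i-1}(λᵢ) = 0`, and in characteristic zero this means `λᵢ` does not involve `x_{i-1}`.
-/

namespace MvPolynomial

variable {R σ : Type*}

section CommSemiring

variable [CommSemiring R]

theorem derivation_eq_zero_of_mem_supported {A : Type*} [AddCommMonoid A] [Module R A]
    [Module (MvPolynomial σ R) A] {D : Derivation R (MvPolynomial σ R) A} {s : Set σ}
    (h : ∀ j ∈ s, D (X j) = 0) {f : MvPolynomial σ R} (hf : f ∈ supported R s) : D f = 0 :=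
  derivation_eqOn_supported (D₂ := 0) h hf

theorem pderiv_eq_zero_of_mem_supported {s : Set σ} {k : σ} (hk : k ∉ s)
    {f : MvPolynomial σ R} (hf : f ∈ supported R s) : pderiv k f = 0 :=
  derivation_eq_zero_of_mem_supported
    (fun _ hj => pderiv_X_of_ne (ne_of_mem_of_not_mem hj hk)) hf

end CommSemiring

section CommRing

variable [CommRing R]

theorem commutator_apply_X_eq_smul_pderiv {a b : σ} (hab : a ≠ b) (c : R) (q : MvPolynomial σ R)
    {u v : Derivation R (MvPolynomial σ R) (MvPolynomial σ R)}
    (huq : u q = 0) (hvb : v (X b) = 0) (hub : pderiv b (u (X b)) = 0)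
    (hvub : v (u (X b)) = 0) :
    (⁅c • pderiv a + u, q • pderiv b + v⁆ : Derivation R (MvPolynomial σ R) (MvPolynomial σ R))
      (X b) = c • pderiv a q := by
  simp [Derivation.commutator_apply, pderiv_X_of_ne hab.symm, huq, hvb, hub, hvub]

variable [IsDomain R] [CharZero R]

theorem pderiv_ne_zero_of_mem_vars {p : MvPolynomial σ R} {k : σ} (hk : k ∈ p.vars) :
    pderiv k p ≠ 0 := by
  obtain ⟨d, hd, hdk⟩ := (mem_vars_iff_mem_support k).1 hk
  have hd_eq : d - Finsupp.single k 1 + Finsupp.single k 1 = d :=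
    tsub_add_cancel_of_le <| Finsupp.single_le_iff.2 <| Nat.one_le_iff_ne_zero.2 <|
      Finsupp.mem_support_iff.1 hdk
  intro h0
  have hcoeff := coeff_pderiv (i := k) p (d - Finsupp.single k 1)
  rw [h0, coeff_zero, hd_eq, eq_comm] at hcoeff
  exact mul_ne_zero (mem_support_iff.1 hd) (Nat.cast_add_one_ne_zero _) hcoeff

theorem mem_supported_diff_of_pderiv_eq_zero {s : Set σ} {k : σ} {p : MvPolynomial σ R}
    (hp : p ∈ supported R s) (hk : pderiv k p = 0) : p ∈ supported R (s \ {k}) :=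
  mem_supported.2 fun _ hj =>
    ⟨mem_supported.1 hp hj, fun h => pderiv_ne_zero_of_mem_vars (h ▸ hj) hk⟩

end CommRing

end MvPolynomial

namespace U

variable {K : Type} [Field K] {n i : ℕ} {D : DerPn K n}

theorem apply_X_mem_Psub (hD : D ∈ U K n i) (j : Fin n) : D (X j) ∈ Psub K n j :=
  (hD j).1

theorem apply_X_eq_zero (hD : D ∈ U K n i) {j : Fin n} (hj : (j : ℕ) + 1 < i) : D (X j) = 0 :=
  (hD j).2 hj

theorem apply_eq_zero_of_mem_Psub {j : ℕ} {p : Pn K n} (hD : D ∈ U K n i)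
    (hp : p ∈ Psub K n j) (hji : j < i) : D p = 0 :=
  derivation_eq_zero_of_mem_supported
    (fun k hk => apply_X_eq_zero hD (by have : (k : ℕ) < j := hk; omega)) hp

end U

theorem lambda_drops_one_general (K : Type) [Field K] [CharZero K] (n : ℕ)
    (i : ℕ) (h2 : 2 ≤ i)
    (idx1 idx2 : Fin n) (hidx1 : (idx1 : ℕ) = i - 2) (hidx2 : (idx2 : ℕ) = i - 1)
    (li : Pn K n) (hli : li ∈ Psub K n (i - 1))
    (ui : DerPn K n) (hui : ui ∈ U K n (i + 1))
    (lam : K) (hlam : lam ≠ 0)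
    (u' : DerPn K n) (hu' : u' ∈ U K n i)
    (hbr : ⁅lam • pderiv idx1 + u', li • pderiv idx2 + ui⁆ = (0 : DerPn K n)) :
    (pderiv idx1) li = 0 ∧ li ∈ Psub K n (i - 2) := by
  have hne : idx1 ≠ idx2 := fun h => by have := congrArg Fin.val h; omega
  have hf : u' (X idx2) ∈ Psub K n (i - 1) := hidx2 ▸ U.apply_X_mem_Psub hu' idx2
  have hbr_X : lam • pderiv idx1 li = 0 := by
    rw [← commutator_apply_X_eq_smul_pderiv hne lam li
      (U.apply_eq_zero_of_mem_Psub hu' hli (by omega)) (U.apply_X_eq_zero hui (by omega))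
      (pderiv_eq_zero_of_mem_supported (by simp [hidx2]) hf)
      (U.apply_eq_zero_of_mem_Psub hui hf (by omega)), hbr]
    rfl
  have hder : pderiv idx1 li = 0 := (smul_eq_zero.1 hbr_X).resolve_left hlam
  refine ⟨hder, supported_mono (fun k hk => ?_) (mem_supported_diff_of_pderiv_eq_zero hli hder)⟩
  have hk_lt : (k : ℕ) < i - 1 := hk.1
  have hk_ne : (k : ℕ) ≠ idx1 := Fin.val_ne_of_ne hk.2
  show (k : ℕ) < i - 2
  omega

/-- if `[λ_{i-1}∂_{i-1} + u_{i-1}, λᵢ∂ᵢ + uᵢ] = 0` with `λᵢ ∈ P_{i-1}`,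
`uᵢ ∈ u_{n,i+1}`, `λ_{i-1} ∈ K*`, `u_{i-1} ∈ u_{n,i}`, then `∂_{i-1}(λᵢ) = 0`, i.e.
`λᵢ ∈ P_{i-2}`. (Indices `1`-indexed; `∂ᵢ = pderiv idx` with `(idx:ℕ) = i-1`.) -/
theorem lambda_drops_one (K : Type) [Field K] [CharZero K] (n : ℕ) (hn : 2 ≤ n)
    (i : ℕ) (h2 : 2 ≤ i) (hin : i ≤ n)
    (idx1 idx2 : Fin n) (hidx1 : (idx1 : ℕ) = i - 2) (hidx2 : (idx2 : ℕ) = i - 1)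
    (li : Pn K n) (hli : li ∈ Psub K n (i - 1))
    (ui : DerPn K n) (hui : ui ∈ U K n (i + 1))
    (lam : K) (hlam : lam ≠ 0)
    (u' : DerPn K n) (hu' : u' ∈ U K n i)
    (hbr : ⁅lam • pderiv idx1 + u', li • pderiv idx2 + ui⁆ = (0 : DerPn K n)) :
    (pderiv idx1) li = 0 ∧ li ∈ Psub K n (i - 2) :=
  lambda_drops_one_general K n i h2 idx1 idx2 hidx1 hidx2 li hli ui hui lam hlam u' hu' hbr
end
end

section
/- For each i ≥ 0, the subspace Nᵢ = {u ∈ u_n | δⱼ^{i+1}(u) = 0 for j = 1,...,n−1}, where δⱼ = ad(∂ⱼ), is a finite-dimensional K-vector space; explicitly, Nᵢ = ⊕_{j=1}^{n} (Nᵢ ∩ P_{j-1}∂ⱼ), where Nᵢ ∩ P_{j-1}∂ⱼ has basis {x^α ∂ⱼ : α ∈ ℕ^{j-1}, α_k ≤ i for all k}. -/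
/-!
Since `∂ⱼ xₗ` is a constant, which every derivation kills, `(ad ∂ⱼ)^s u` takes the value
`∂ⱼ^s (u xₗ)` at `xₗ`. In characteristic zero `∂ⱼ^(i+1) p = 0` exactly when every monomial of `p`
has degree at most `i` in `xⱼ`. So `u ∈ Nᵢ` iff every coefficient `u xₗ ∈ P_{l-1}` has degree at
most `i` in each variable; the last variable, on which no condition is imposed, does not occur
in any `P_{l-1}`. A derivation is determined by these finitely many coefficients, each ranging
over a finite-dimensional space of polynomials.
-/

open MvPolynomial

noncomputable section

/-- `Nᵢ = {u ∈ u_n | ad(∂ⱼ)^{i+1}(u) = 0 for j = 1,…,n-1}` (0-indexed `j < n-1`). -/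
def Nset (K : Type) [Field K] (n i : ℕ) : Set (DerPn K n) :=
  {u | u ∈ U K n 1 ∧ ∀ j : Fin n, (j : ℕ) < n - 1 →
    (fun v : DerPn K n => ⁅(pderiv j : DerPn K n), v⁆)^[i + 1] u = 0}

namespace MvPolynomial

variable {σ R : Type*}

theorem finite_setOf_forall_le [Finite σ] (d : ℕ) : {m : σ →₀ ℕ | ∀ i, m i ≤ d}.Finite := by
  classical
  have := Fintype.ofFinite σ
  exact (Set.finite_Iic (Finsupp.equivFunOnFinite.symm fun _ => d)).subset fun m hm i => hm i

instance [CommSemiring R] [Finite σ] (d : ℕ) : Module.Finite R (restrictDegree σ R d) :=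
  have := (finite_setOf_forall_le (σ := σ) d).to_subtype
  Module.Finite.of_basis (basisRestrictSupport R _)

theorem apply_eq_zero_of_mem_support_of_mem_supported [CommSemiring R] {s : Set σ}
    {p : MvPolynomial σ R} (hp : p ∈ supported R s) {m : σ →₀ ℕ} (hm : m ∈ p.support) {k : σ}
    (hk : k ∉ s) : m k = 0 := by
  by_contra h
  exact hk (mem_supported.1 hp ((mem_vars_iff_mem_support k).2
    ⟨m, hm, Finsupp.mem_support_iff.2 h⟩))

section CharZero

variable [CommSemiring R] [NoZeroDivisors R] [CharZero R]

theorem mem_support_pderiv_iff (i : σ) (p : MvPolynomial σ R) (m : σ →₀ ℕ) :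
    m ∈ (pderiv i p).support ↔ m + Finsupp.single i 1 ∈ p.support := by
  simp only [mem_support_iff, coeff_pderiv, ne_eq, mul_eq_zero, not_or]
  exact and_iff_left (Nat.cast_add_one_ne_zero _)

theorem iterate_pderiv_eq_zero_iff (i : σ) (p : MvPolynomial σ R) (s : ℕ) :
    (pderiv i)^[s] p = 0 ↔ ∀ m ∈ p.support, m i < s := by
  induction s generalizing p with
  | zero => simp [← support_eq_empty, Finset.eq_empty_iff_forall_notMem]
  | succ s ih =>
    rw [Function.iterate_succ_apply, ih]
    constructor
    · intro h m hm
      by_contra! hle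
      have hm' : m - Finsupp.single i 1 + Finsupp.single i 1 = m :=
        tsub_add_cancel_of_le (Finsupp.single_le_iff.2 (by omega))
      have := h _ ((mem_support_pderiv_iff i p _).2 (hm'.symm ▸ hm))
      simp only [Finsupp.coe_tsub, Pi.sub_apply, Finsupp.single_eq_same] at this
      omega
    · intro h m hm
      have := h _ ((mem_support_pderiv_iff i p m).1 hm)
      simp only [Finsupp.coe_add, Pi.add_apply, Finsupp.single_eq_same] at this
      omega

end CharZero

end MvPolynomial

theorem Derivation.iterate_lie_apply_of_eq_algebraMap {R A : Type*} [CommRing R] [CommRing A]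
    [Algebra R A] (E D : Derivation R A A) {a : A} {r : R} (h : E a = algebraMap R A r) (s : ℕ) :
    ((fun v => ⁅E, v⁆)^[s] D) a = E^[s] (D a) := by
  induction s with
  | zero => rfl
  | succ s ih =>
    rw [Function.iterate_succ_apply', Function.iterate_succ_apply', Derivation.commutator_apply,
      ih, h, Derivation.map_algebraMap, sub_zero]

section

variable {K : Type} [Field K] {n : ℕ}

theorem mem_U_one_iff {u : DerPn K n} : u ∈ U K n 1 ↔ ∀ j : Fin n, u (X j) ∈ Psub K n j :=
  forall_congr' fun _ => and_iff_left fun h => absurd h (by omega)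

theorem iterate_lie_pderiv_apply_X (D : DerPn K n) (j l : Fin n) (s : ℕ) :
    ((fun v : DerPn K n => ⁅(pderiv j : DerPn K n), v⁆)^[s] D) (X l) =
      (pderiv j)^[s] (D (X l)) := by
  classical
  refine Derivation.iterate_lie_apply_of_eq_algebraMap _ D
    (r := (Pi.single j 1 : Fin n → K) l) ?_ s
  rcases eq_or_ne j l with rfl | h <;> simp [pderiv_X, *]

/-- `⊕ⱼ span {x^α ∂ⱼ : α ∈ ℕ^{j-1}, α_k ≤ i}`, built from the coefficients `u xⱼ`. -/
def unitriangularDegreeLE (K : Type) [Field K] (n i : ℕ) : Submodule K (DerPn K n) :=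
  (Submodule.pi Set.univ fun j : Fin n =>
    (Psub K n j).toSubmodule ⊓ restrictDegree (Fin n) K i).map
      (mkDerivationEquiv (σ := Fin n) (A := Pn K n) K).toLinearMap

theorem mem_unitriangularDegreeLE_iff {i : ℕ} {u : DerPn K n} :
    u ∈ unitriangularDegreeLE K n i ↔
      ∀ j : Fin n, u (X j) ∈ Psub K n j ∧ u (X j) ∈ restrictDegree (Fin n) K i := by
  rw [unitriangularDegreeLE, Submodule.mem_map_equiv]
  simp only [Submodule.mem_pi, Set.mem_univ, true_implies, Submodule.mem_inf,
    Subalgebra.mem_toSubmodule]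
  rfl

instance (i : ℕ) : FiniteDimensional K (unitriangularDegreeLE K n i) := by
  rw [unitriangularDegreeLE, ← Submodule.fg_iff_finiteDimensional]
  refine (Submodule.fg_pi fun j => ?_).map _
  exact (Submodule.fg_iff_finiteDimensional _).2 (Submodule.finiteDimensional_of_le inf_le_right)

theorem Nset_eq_unitriangularDegreeLE [CharZero K] (i : ℕ) :
    Nset K n i = unitriangularDegreeLE K n i := by
  ext u
  simp only [Nset, Set.mem_ofPred_eq, SetLike.mem_coe, mem_U_one_iff,
    mem_unitriangularDegreeLE_iff, mem_restrictDegree]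
  refine ⟨fun ⟨hP, hN⟩ j => ⟨hP j, fun m hm k => ?_⟩,
    fun h => ⟨fun j => (h j).1, fun k _ => ?_⟩⟩
  · obtain hk | hk := lt_or_ge (k : ℕ) (n - 1)
    · have hkj := congrArg (· (X j)) (hN k hk)
      rw [iterate_lie_pderiv_apply_X, Derivation.zero_apply, iterate_pderiv_eq_zero_iff] at hkj
      exact Nat.lt_succ_iff.1 (hkj m hm)
    · have hjk : k ∉ {k' : Fin n | (k' : ℕ) < j} := by
        simp only [Set.mem_ofPred_eq, not_lt]
        omega
      rw [apply_eq_zero_of_mem_support_of_mem_supported (hP j) hm hjk]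
      exact Nat.zero_le i
  · refine derivation_ext fun l => ?_
    rw [iterate_lie_pderiv_apply_X, Derivation.zero_apply, iterate_pderiv_eq_zero_iff]
    exact fun m hm => Nat.lt_succ_of_le ((h l).2 m hm k)

end

theorem Nset_finiteDimensional_general (K : Type) [Field K] [CharZero K] (n : ℕ)
    (i : ℕ) :
    ∃ S : Submodule K (DerPn K n), (S : Set (DerPn K n)) = Nset K n i ∧
      FiniteDimensional K S ∧
      ∀ u : DerPn K n, u ∈ S ↔ ∀ j : Fin n, u (X j) ∈ Psub K n j ∧
        ∀ m ∈ (u (X j)).support, ∀ k : Fin n, m k ≤ i :=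
  ⟨unitriangularDegreeLE K n i, (Nset_eq_unitriangularDegreeLE i).symm, inferInstance,
    fun u => by simp_rw [mem_unitriangularDegreeLE_iff, mem_restrictDegree]⟩

/-- each `Nᵢ` is a finite-dimensional subspace of `u_n`; explicitly, it
consists of the derivations `u ∈ u_n` whose coefficient of `∂ⱼ` is a linear combination
of monomials `x^α` with `α` supported on variables `< j` and all exponents `≤ i`. -/
theorem Nset_finiteDimensional (K : Type) [Field K] [CharZero K] (n : ℕ) (hn : 2 ≤ n)
    (i : ℕ) :
    ∃ S : Submodule K (DerPn K n), (S : Set (DerPn K n)) = Nset K n i ∧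
      FiniteDimensional K S ∧
      ∀ u : DerPn K n, u ∈ S ↔ ∀ j : Fin n, u (X j) ∈ Psub K n j ∧
        ∀ m ∈ (u (X j)).support, ∀ k : Fin n, m k ≤ i :=
  Nset_finiteDimensional_general K n i
end
end

section
/- Let λ ∈ P_k with k < i. If u ∈ u_{n,k+1}, then [u, λ∂ᵢ] ∈ P_{i-1}∂ᵢ + u_{n,i+1}, and its ∂ᵢ-component is u(λ)∂ᵢ. -/
open MvPolynomial

noncomputable section

lemma deriv_mem_of_supported {K : Type} [Field K] {n : ℕ} (u : DerPn K n)
    (S : Set (Fin n)) (A : Subalgebra K (Pn K n))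
    (hSA : MvPolynomial.supported K S ≤ A)
    (h : ∀ j ∈ S, u (X j) ∈ A) :
    ∀ p ∈ MvPolynomial.supported K S, u p ∈ A := by
  intro p hp
  induction hp using Algebra.adjoin_induction with
  | mem x hx =>
    obtain ⟨j, hj, rfl⟩ := hx
    exact h j hj
  | algebraMap r => simpa [Derivation.map_algebraMap] using A.zero_mem
  | add x y hx hy ihx ihy => simpa using A.add_mem ihx ihy
  | mul x y hx hy ihx ihy =>
    rw [Derivation.leibniz, smul_eq_mul, smul_eq_mul]
    exact A.add_mem (A.mul_mem (hSA hx) ihy) (A.mul_mem (hSA hy) ihx)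

lemma deriv_zero_of_supported {K : Type} [Field K] {n : ℕ} (u : DerPn K n)
    (S : Set (Fin n)) (h : ∀ j ∈ S, u (X j) = 0) :
    ∀ p ∈ MvPolynomial.supported K S, u p = 0 := by
  intro p hp
  induction hp using Algebra.adjoin_induction with
  | mem x hx => obtain ⟨j, hj, rfl⟩ := hx; exact h j hj
  | algebraMap r => simp [Derivation.map_algebraMap]
  | add x y hx hy ihx ihy => simp [ihx, ihy]
  | mul x y hx hy ihx ihy => simp [Derivation.leibniz, ihx, ihy]

lemma Psub_mono_s19 {K : Type} [Field K] {n : ℕ} {a b : ℕ} (h : a ≤ b) :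
    Psub K n a ≤ Psub K n b :=
  MvPolynomial.supported_mono (fun m hm => lt_of_lt_of_le hm h)


/-- if `λ ∈ P_k` with `k < i` and `u ∈ u_{n,k+1}`, then
`[u, λ∂ᵢ] ∈ P_{i-1}∂ᵢ + u_{n,i+1}` with `∂ᵢ`-component `u(λ)∂ᵢ`. -/
theorem bracket_component (K : Type) [Field K] [CharZero K] (n : ℕ) (hn : 2 ≤ n)
    (k i : ℕ) (hk : 1 ≤ k) (hki : k < i) (hin : i ≤ n)
    (idx : Fin n) (hidx : (idx : ℕ) = i - 1)
    (lam : Pn K n) (hlam : lam ∈ Psub K n k)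
    (u : DerPn K n) (hu : u ∈ U K n (k + 1)) :
    u lam ∈ Psub K n (i - 1) ∧
    ∃ v ∈ U K n (i + 1), ⁅u, lam • pderiv idx⁆ = (u lam) • pderiv idx + v := by
  have hul : u lam ∈ Psub K n (i - 1) := by
    refine deriv_mem_of_supported u {m : Fin n | (m : ℕ) < k} (Psub K n (i - 1))
      (Psub_mono_s19 (by omega)) (fun j hj => ?_) lam hlam
    simp only [Set.mem_setOf_eq] at hj
    exact Psub_mono_s19 (show (j : ℕ) ≤ i - 1 by omega) ((hu j).1)
  have hkill : ∀ j : Fin n, (j : ℕ) ≤ (idx : ℕ) → pderiv idx (u (X j)) = 0 := by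
    intro j hj
    refine deriv_zero_of_supported (pderiv idx) {m : Fin n | (m : ℕ) < (j : ℕ)}
      (fun m hm => pderiv_X_of_ne ?_) _ ((hu j).1)
    simp only [Set.mem_setOf_eq] at hm
    exact fun e => by rw [e] at hm; omega
  have hmem : ∀ j : Fin n, pderiv idx (u (X j)) ∈ Psub K n j := by
    intro j
    refine deriv_mem_of_supported (pderiv idx) {m : Fin n | (m : ℕ) < (j : ℕ)}
      (Psub K n j) le_rfl (fun m hm => ?_) _ ((hu j).1)
    by_cases he : m = idx
    · subst he; rw [pderiv_X_self]; exact (Psub K n j).one_mem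
    · rw [pderiv_X_of_ne he]; exact (Psub K n j).zero_mem
  set v : DerPn K n := ⁅u, lam • pderiv idx⁆ - (u lam) • pderiv idx with hv
  refine ⟨hul, v, ?_, by rw [hv]; abel⟩
  intro j
  have hval : v (X j)
      = u (lam * pderiv idx (X j)) - lam * pderiv idx (u (X j))
        - u lam * pderiv idx (X j) := by
    rw [hv, Derivation.sub_apply, Derivation.commutator_apply, Derivation.smul_apply,
      Derivation.smul_apply, Derivation.smul_apply, smul_eq_mul, smul_eq_mul, smul_eq_mul]
  by_cases hje : j = idx
  · subst hje
    have h0 : v (X j) = 0 := by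
      rw [hval, hkill j le_rfl, pderiv_X_self, mul_one, mul_zero, mul_one]
      ring
    rw [h0]
    exact ⟨(Psub K n (j : ℕ)).zero_mem, fun _ => rfl⟩
  · by_cases hlt : (j : ℕ) ≤ (idx : ℕ)
    · have h0 : v (X j) = 0 := by
        rw [hval, hkill j hlt, pderiv_X_of_ne hje]
        simp
      rw [h0]
      exact ⟨(Psub K n (j : ℕ)).zero_mem, fun _ => rfl⟩
    · have hval2 : v (X j) = -(lam * pderiv idx (u (X j))) := by
        rw [hval, pderiv_X_of_ne hje]
        simp
      constructor
      · rw [hval2]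
        exact (Psub K n (j : ℕ)).neg_mem <| (Psub K n (j : ℕ)).mul_mem
          (Psub_mono_s19 (show k ≤ (j : ℕ) by omega) hlam) (hmem j)
      · intro hcon
        exfalso
        omega
end
end
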